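/- Let F : ℝ → ℝ be Lipschitz and let a ≤ b be real numbers. Then there exists a constant C > 0 such that for every m ≥ 0 and every x ∈ ℝ², ∫_a^b e^{−m|x−(t,F(t))|} |x−(t,F(t))|^{−1/2} dt ≤ C (1+m)^{−1/2}. In particular (taking m = 0), sup_{x∈ℝ²} ∫_a^b |x−(t,F(t))|^{−1/2} dt < ∞. -/

import Mathlib

open MeasureTheory Metric

noncomputable section

/-- The point `(t, F t)` of the graph of `F : ℝ → ℝ`, as a point of the Euclidean plane. -/
def graphPt (F : ℝ → ℝ) (t : ℝ) : EuclideanSpace ℝ (Fin 2) :=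
  (EuclideanSpace.equiv (Fin 2) ℝ).symm ![t, F t]

/-!
Since `|x - (t, F t)| ≥ |t - x₀|`, the integrand is at most `e^{-m|s|} |s|^{-1/2}` with
`s = t - x₀`, and `e^{-w} ≤ 2 (1 + w)^{-3/2}` bounds this by the even majorant
`2 |s|^{-1/2} (1 + m|s|)^{-3/2}`. The majorant decreases in `|s|`, so its integral over an
interval of length `L` is at most twice its integral over `[0, L]`, which equals
`4 √(L / (1 + mL)) ≤ 4 √(1 + L) (1 + m)^{-1/2}` because `4 √(u / (1 + mu))` is a primitive.
-/

open Set intervalIntegral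

theorem MeasureTheory.LocallyIntegrable.intervalIntegrable {E : Type*} [NormedAddCommGroup E]
    {f : ℝ → E} {μ : Measure ℝ} (hf : LocallyIntegrable f μ) (a b : ℝ) :
    IntervalIntegrable f μ a b :=
  (hf.integrableOn_isCompact isCompact_uIcc).intervalIntegrable

section EvenAntitone

variable {g : ℝ → ℝ}

theorem integral_le_integral_zero_of_antitoneOn (hg_anti : AntitoneOn g (Ioi 0))
    (hg_int : LocallyIntegrable g volume) {p q : ℝ} (hp : 0 ≤ p) (hpq : p ≤ q) :
    ∫ s in p..q, g s ≤ ∫ s in 0..(q - p), g s := by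
  calc ∫ s in p..q, g s = ∫ s in 0..(q - p), g (s + p) := by
        rw [integral_comp_add_right, zero_add, sub_add_cancel]
    _ ≤ ∫ s in 0..(q - p), g s := by
        have hshift : IntervalIntegrable (fun s => g (s + p)) volume 0 (q - p) := by
          simpa using (hg_int.intervalIntegrable p q).comp_add_right p
        refine integral_mono_on_of_le_Ioo (sub_nonneg.2 hpq) hshift
          (hg_int.intervalIntegrable _ _) fun s hs => ?_
        exact hg_anti hs.1 (show 0 < s + p by linarith [hs.1]) (by linarith)

theorem integral_le_two_mul_integral_zero_of_even (hg_even : ∀ s, g (-s) = g s)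
    (hg_nonneg : ∀ s, 0 ≤ g s) (hg_anti : AntitoneOn g (Ioi 0))
    (hg_int : LocallyIntegrable g volume) {p q : ℝ} (hpq : p ≤ q) :
    ∫ s in p..q, g s ≤ 2 * ∫ s in 0..(q - p), g s := by
  have hreflect : ∀ u v, ∫ s in u..v, g s = ∫ s in -v..-u, g s := fun u v => by
    simp only [← integral_comp_neg, hg_even]
  have hmono : ∀ {u}, 0 ≤ u → u ≤ q - p →
      ∫ s in 0..u, g s ≤ ∫ s in 0..(q - p), g s :=
    fun hu huL => integral_mono_interval le_rfl hu huL
      (Filter.Eventually.of_forall hg_nonneg) (hg_int.intervalIntegrable _ _)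
  have hnonneg : 0 ≤ ∫ s in 0..(q - p), g s :=
    integral_nonneg (by linarith) fun s _ => hg_nonneg s
  rcases le_total 0 p with hp | hp
  · linarith [integral_le_integral_zero_of_antitoneOn hg_anti hg_int hp hpq]
  rcases le_total q 0 with hq | hq
  · have := integral_le_integral_zero_of_antitoneOn hg_anti hg_int (neg_nonneg.2 hq)
      (neg_le_neg hpq)
    rw [neg_sub_neg] at this
    linarith [hreflect p q]
  · rw [← integral_add_adjacent_intervals (hg_int.intervalIntegrable p 0)
      (hg_int.intervalIntegrable 0 q), hreflect p 0, neg_zero]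
    linarith [hmono (neg_nonneg.2 hp) (by linarith), hmono hq (by linarith)]

end EvenAntitone

theorem Real.exp_neg_le_two_mul_one_add_rpow {w : ℝ} (hw : 0 ≤ w) :
    Real.exp (-w) ≤ 2 * (1 + w) ^ (-(3/2 : ℝ)) := by
  have hpow : (1 + w) ^ (3/2 : ℝ) ≤ 2 * Real.exp w :=
    calc (1 + w) ^ (3/2 : ℝ) ≤ (1 + w) ^ (2 : ℝ) :=
          Real.rpow_le_rpow_of_exponent_le (by linarith) (by norm_num)
      _ = (1 + w) ^ 2 := Real.rpow_two _
      _ ≤ 2 * Real.exp w := by nlinarith [Real.quadratic_le_exp_of_nonneg hw]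
  calc Real.exp (-w) = (Real.exp w)⁻¹ := Real.exp_neg w
    _ ≤ ((1 + w) ^ (3/2 : ℝ) / 2)⁻¹ := inv_anti₀ (by positivity) (by linarith)
    _ = 2 * (1 + w) ^ (-(3/2 : ℝ)) := by
        rw [inv_div, div_eq_mul_inv, Real.rpow_neg (by positivity)]

namespace SchurTest

-- Since `0 ^ (-1/2) = 0` in Lean, `majorant m 0 = 0`: comparisons with it hold only off `s = 0`.
def majorant (m s : ℝ) : ℝ := 2 * |s| ^ (-(1/2 : ℝ)) * (1 + m * |s|) ^ (-(3/2 : ℝ))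

def majorantPrimitive (m u : ℝ) : ℝ := 4 * u ^ (1/2 : ℝ) * (1 + m * u) ^ (-(1/2 : ℝ))

variable {m : ℝ}

theorem majorant_nonneg (hm : 0 ≤ m) (s : ℝ) : 0 ≤ majorant m s := by
  unfold majorant; positivity

theorem majorant_neg (m s : ℝ) : majorant m (-s) = majorant m s := by
  simp only [majorant, abs_neg]

theorem majorant_le (hm : 0 ≤ m) (s : ℝ) : majorant m s ≤ 2 * ‖s‖ ^ (-(1/2 : ℝ)) := by
  have hle : (1 + m * |s|) ^ (-(3/2 : ℝ)) ≤ 1 :=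
    Real.rpow_le_one_of_one_le_of_nonpos (by nlinarith [abs_nonneg s]) (by norm_num)
  rw [majorant, Real.norm_eq_abs]
  exact mul_le_of_le_one_right (by positivity) hle

theorem locallyIntegrable_majorant (hm : 0 ≤ m) : LocallyIntegrable (majorant m) volume := by
  refine locallyIntegrable_of_norm_le_rpow (by simp) (C := 2) (α := 1/2) (by simp; norm_num)
    (Filter.Eventually.of_forall fun s => ?_) (by unfold majorant; fun_prop)
  rw [Real.norm_of_nonneg (majorant_nonneg hm s)]
  exact majorant_le hm s

theorem antitoneOn_majorant (hm : 0 ≤ m) : AntitoneOn (majorant m) (Ioi 0) := by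
  intro s (hs : 0 < s) u (hu : 0 < u) hsu
  simp only [majorant, abs_of_pos hs, abs_of_pos hu]
  gcongr 2 * ?_ * ?_
  · exact Real.rpow_le_rpow_of_nonpos hs hsu (by norm_num)
  · exact Real.rpow_le_rpow_of_nonpos (by positivity) (by gcongr) (by norm_num)

theorem hasDerivAt_majorantPrimitive (hm : 0 ≤ m) {s : ℝ} (hs : 0 < s) :
    HasDerivAt (majorantPrimitive m) (majorant m s) s := by
  have hden : 0 < 1 + m * s := by positivity
  have hsqrt := (Real.hasDerivAt_rpow_const (p := 1/2) (Or.inl hs.ne')).const_mul 4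
  have hinv := (((hasDerivAt_id s).const_mul m).const_add 1).rpow_const (p := -(1/2))
    (Or.inl hden.ne')
  refine (hsqrt.mul hinv).congr_deriv ?_
  have e1 : s ^ (1/2 : ℝ) = s * s ^ (-(1/2) : ℝ) := by
    rw [← Real.rpow_one_add' hs.le (by norm_num)]; norm_num
  have e2 : (1 + m * s) ^ (-(1/2) : ℝ) = (1 + m * s) * (1 + m * s) ^ (-(3/2) : ℝ) := by
    rw [← Real.rpow_one_add' hden.le (by norm_num)]; norm_num
  simp only [majorant, abs_of_pos hs, id, e1, e2]
  norm_num
  ring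

theorem integral_majorant_eq (hm : 0 ≤ m) {L : ℝ} (hL : 0 ≤ L) :
    ∫ s in 0..L, majorant m s = majorantPrimitive m L := by
  have hcont : ContinuousOn (majorantPrimitive m) (Icc 0 L) := by
    refine (continuousOn_const.mul
      (Real.continuous_rpow_const (q := 1/2) (by norm_num)).continuousOn).mul
      ((continuous_const.add (continuous_const.mul continuous_id)).continuousOn.rpow_const
        (p := -(1/2)) fun u hu => Or.inl ?_)
    have : 0 ≤ u := hu.1
    exact (show 0 < 1 + m * u by positivity).ne'
  rw [integral_eq_sub_of_hasDerivAt_of_le hL hcont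
    (fun s hs => hasDerivAt_majorantPrimitive hm hs.1)
    ((locallyIntegrable_majorant hm).intervalIntegrable 0 L)]
  simp [majorantPrimitive]

theorem majorantPrimitive_le (hm : 0 ≤ m) {L : ℝ} (hL : 0 ≤ L) :
    majorantPrimitive m L ≤ 4 * (1 + L) ^ (1/2 : ℝ) * (1 + m) ^ (-(1/2 : ℝ)) := by
  have hden : 0 < 1 + m * L := by positivity
  have hquot : L / (1 + m * L) ≤ (1 + L) / (1 + m) := by
    rw [div_le_div_iff₀ hden (by positivity)]
    nlinarith [mul_nonneg hm hL, mul_nonneg (mul_nonneg hm hL) hL]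
  have hsqrt_div : ∀ {x y : ℝ}, 0 ≤ x → 0 < y →
      x ^ (1/2 : ℝ) * y ^ (-(1/2 : ℝ)) = (x / y) ^ (1/2 : ℝ) := fun hx hy => by
    rw [Real.rpow_neg hy.le, ← div_eq_mul_inv, Real.div_rpow hx hy.le]
  rw [majorantPrimitive, mul_assoc, mul_assoc, hsqrt_div hL hden,
    hsqrt_div (by positivity) (by positivity)]
  gcongr

theorem integral_majorant_le (hm : 0 ≤ m) {p q : ℝ} (hpq : p ≤ q) :
    ∫ s in p..q, majorant m s ≤ 8 * (1 + (q - p)) ^ (1/2 : ℝ) * (1 + m) ^ (-(1/2 : ℝ)) :=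
  calc ∫ s in p..q, majorant m s ≤ 2 * ∫ s in 0..(q - p), majorant m s :=
        integral_le_two_mul_integral_zero_of_even (majorant_neg m) (majorant_nonneg hm)
          (antitoneOn_majorant hm) (locallyIntegrable_majorant hm) hpq
    _ = 2 * majorantPrimitive m (q - p) := by rw [integral_majorant_eq hm (sub_nonneg.2 hpq)]
    _ ≤ 8 * (1 + (q - p)) ^ (1/2 : ℝ) * (1 + m) ^ (-(1/2 : ℝ)) := by
        linarith [majorantPrimitive_le hm (sub_nonneg.2 hpq)]

theorem exp_neg_mul_rpow_le_majorant {r s : ℝ} (hm : 0 ≤ m) (hs : s ≠ 0) (hsr : |s| ≤ r) :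
    Real.exp (-m * r) * r ^ (-(1/2 : ℝ)) ≤ majorant m s := by
  have hs' : 0 < |s| := abs_pos.2 hs
  have hr : 0 < r := hs'.trans_le hsr
  calc Real.exp (-m * r) * r ^ (-(1/2 : ℝ))
      ≤ 2 * (1 + m * r) ^ (-(3/2 : ℝ)) * r ^ (-(1/2 : ℝ)) := by
        rw [neg_mul]
        exact mul_le_mul_of_nonneg_right (Real.exp_neg_le_two_mul_one_add_rpow (by positivity))
          (Real.rpow_nonneg hr.le _)
    _ ≤ 2 * (1 + m * |s|) ^ (-(3/2 : ℝ)) * |s| ^ (-(1/2 : ℝ)) := by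
        gcongr 2 * ?_ * ?_
        · exact Real.rpow_le_rpow_of_nonpos (by positivity) (by gcongr) (by norm_num)
        · exact Real.rpow_le_rpow_of_nonpos hs' hsr (by norm_num)
    _ = majorant m s := by rw [majorant]; ring

theorem integral_exp_neg_mul_rpow_le_integral_majorant {a b c : ℝ} {d : ℝ → ℝ}
    (hm : 0 ≤ m) (hab : a ≤ b) (hd : ∀ t, |t - c| ≤ d t) :
    ∫ t in a..b, Real.exp (-m * d t) * d t ^ (-(1/2 : ℝ)) ≤
      ∫ s in (a - c)..(b - c), majorant m s := by
  rw [← integral_comp_sub_right, integral_of_le hab, integral_of_le hab]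
  refine integral_mono_of_nonneg (Filter.Eventually.of_forall fun t => ?_) ?_ ?_
  · have := (abs_nonneg _).trans (hd t)
    positivity
  · have h :=
      ((locallyIntegrable_majorant hm).intervalIntegrable (a - c) (b - c)).comp_sub_right c
    simp only [sub_add_cancel] at h
    exact h.1
  · filter_upwards [ae_restrict_of_ae ((countable_singleton c).ae_notMem volume)] with t ht
    exact exp_neg_mul_rpow_le_majorant hm (sub_ne_zero.2 ht) (hd t)

end SchurTest

open SchurTest

theorem abs_sub_le_norm_sub_graphPt (F : ℝ → ℝ) (x : EuclideanSpace ℝ (Fin 2)) (t : ℝ) :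
    |t - x 0| ≤ ‖x - graphPt F t‖ := by
  have h := PiLp.norm_apply_le (x - graphPt F t) 0
  simpa [graphPt, abs_sub_comm] using h

theorem schur_integral_bound_graph
    (F : ℝ → ℝ) (a b : ℝ) (hab : a ≤ b) :
    ∃ C > 0,
      (∀ m : ℝ, 0 ≤ m → ∀ x : EuclideanSpace ℝ (Fin 2),
        (∫ t in a..b,
            Real.exp (-m * ‖x - graphPt F t‖) * ‖x - graphPt F t‖ ^ (-(1/2 : ℝ))) ≤
          C * (1 + m) ^ (-(1/2 : ℝ))) ∧
      (∀ x : EuclideanSpace ℝ (Fin 2),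
        (∫ t in a..b, ‖x - graphPt F t‖ ^ (-(1/2 : ℝ))) ≤ C) := by
  have hbound : ∀ m : ℝ, 0 ≤ m → ∀ x : EuclideanSpace ℝ (Fin 2),
      (∫ t in a..b,
          Real.exp (-m * ‖x - graphPt F t‖) * ‖x - graphPt F t‖ ^ (-(1/2 : ℝ))) ≤
        8 * (1 + (b - a)) ^ (1/2 : ℝ) * (1 + m) ^ (-(1/2 : ℝ)) := fun m hm x => by
    have h := integral_majorant_le hm (sub_le_sub_right hab (x 0))
    rw [sub_sub_sub_cancel_right] at h
    exact (integral_exp_neg_mul_rpow_le_integral_majorant hm hab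
      (abs_sub_le_norm_sub_graphPt F x)).trans h
  refine ⟨_, by positivity, hbound, fun x => ?_⟩
  simpa using hbound 0 le_rfl x

end
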